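/- arXiv:1803.10728 — 2 statements merged into one kernel-verified Lean document; each statement's English description precedes it below -/
import Mathlib

section
/- Let g₁,...,g_r be elements of the symmetric group S_n generating a transitive subgroup with g₁⋯g_r = 1. Then the quantity g defined by 2(n + g − 1) = Σᵢ ind(gᵢ), where ind(gᵢ) = n minus the number of cycles of gᵢ, is a non-negative integer; i.e., Σᵢ ind(gᵢ) ≥ 2(n−1) and Σᵢ ind(gᵢ) is even. -/
/-!
Write every `gᵢ` as a product of `ind gᵢ` transpositions. Multiplying a permutation by a
transposition `(a b)` adds one cycle if `a` and `b` lie in the same cycle and removes one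
otherwise. Hence, along the concatenated word of transpositions, `n + #cycles - 2 * #orbits`
(of the partial product, resp. of the group generated so far) grows by at most one per letter:
a letter joining two orbits also joins two cycles. The whole word multiplies to `1`, which has
`n` cycles, and generates a transitive group, so `n + n - 2 ≤ ∑ ind gᵢ`. Parity comes from
`sign gᵢ = (-1) ^ ind gᵢ`.
-/

/-- The number of disjoint cycles of a permutation of `Fin n`,
counting fixed points as cycles of length 1. -/
def cyclesCount {n : ℕ} (g : Equiv.Perm (Fin n)) : ℕ :=
  Multiset.card g.cycleType + (n - g.support.card)

/-- `ind g = n - (number of cycles of g)`. -/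
def ind {n : ℕ} (g : Equiv.Perm (Fin n)) : ℕ :=
  n - cyclesCount g

open Equiv Equiv.Perm Subgroup MulAction Finset

lemma closure_pair_mul {G : Type*} [Group G] (g h : G) : closure {g, g * h} = closure {g, h} := by
  apply le_antisymm <;> rw [closure_le, Set.insert_subset_iff, Set.singleton_subset_iff]
  · exact ⟨subset_closure (by simp), mul_mem (subset_closure (by simp)) (subset_closure (by simp))⟩
  · refine ⟨subset_closure (by simp), ?_⟩
    simpa using mul_mem (inv_mem (subset_closure (Set.mem_insert g _)))
      (subset_closure (by simp) : g * h ∈ closure {g, g * h})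

namespace Setoid

variable {α : Type*}

open Classical in
/-- The classes of `a` and `b` glued together, by sending the class of `b` onto that of `a`. -/
noncomputable def merge (r : Setoid α) (a b : α) : Setoid α :=
  r.comap fun x => if r x b then a else x

variable {r s : Setoid α} {a b : α}

lemma le_merge : r ≤ r.merge a b := by
  intro x y hxy
  have hb : r x b ↔ r y b := ⟨r.trans (r.symm hxy), r.trans hxy⟩
  rw [merge, comap_rel]
  split_ifs <;> first | exact r.refl a | tauto

lemma merge_rel : r.merge a b a b := by
  rw [merge, comap_rel, if_pos (r.refl b)]
  split_ifs <;> exact r.refl a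

lemma merge_le (hrs : r ≤ s) (hab : s a b) : r.merge a b ≤ s := by
  classical
  have redirect (x : α) : s x (if r x b then a else x) := by
    split_ifs with hx
    · exact s.trans (hrs hx) (s.symm hab)
    · exact s.refl x
  intro x y hxy
  rw [merge, comap_rel] at hxy
  exact s.trans (redirect x) (s.trans (hrs hxy) (s.symm (redirect y)))

lemma merge_eq_self (hab : r a b) : r.merge a b = r :=
  le_antisymm (merge_le le_rfl hab) le_merge

lemma card_quotient_merge_add_one [Finite α] (hab : ¬ r a b) :
    Nat.card (Quotient (r.merge a b)) + 1 = Nat.card (Quotient r) := by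
  classical
  have hrange : Set.range (Quotient.mk'' ∘ fun x => if r x b then a else x) =
      ({⟦b⟧}ᶜ : Set (Quotient r)) := by
    ext q
    induction q using Quotient.inductionOn with | _ y => ?_
    simp only [Set.mem_range, Function.comp_apply, Set.mem_compl_iff, Set.mem_singleton_iff,
      Quotient.eq]
    constructor
    · rintro ⟨x, hx⟩ hy
      split_ifs at hx with hxb
      exacts [hab (r.trans hx hy), hxb (r.trans hx hy)]
    · intro hy
      exact ⟨y, by rw [if_neg hy]⟩
  rw [merge, comap_eq, Nat.card_congr (quotientKerEquivRange _), hrange,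
    Nat.card_coe_set_eq, Set.ncard_compl, Set.ncard_singleton]
  have : Nonempty (Quotient r) := ⟨⟦b⟧⟩
  exact Nat.sub_add_cancel Nat.card_pos

end Setoid

section Orbits

variable {α : Type*}

lemma orbitRel_perm_apply {H : Subgroup (Perm α)} {x y : α} :
    orbitRel H α x y ↔ ∃ σ ∈ H, σ y = x := by
  rw [orbitRel_apply, mem_orbit_iff]
  exact ⟨fun ⟨σ, h⟩ => ⟨σ, σ.2, h⟩, fun ⟨σ, hσ, h⟩ => ⟨⟨σ, hσ⟩, h⟩⟩

lemma orbitRel_apply_self {H : Subgroup (Perm α)} {σ : Perm α} (hσ : σ ∈ H) (x : α) :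
    orbitRel H α (σ x) x :=
  orbitRel_perm_apply.mpr ⟨σ, hσ, rfl⟩

lemma orbitRel_mono {H K : Subgroup (Perm α)} (hHK : H ≤ K) : orbitRel H α ≤ orbitRel K α := by
  intro x y hxy
  obtain ⟨σ, hσ, rfl⟩ := orbitRel_perm_apply.mp hxy
  exact orbitRel_apply_self (hHK hσ) y

lemma orbitRel_closure_le {S : Set (Perm α)} {r : Setoid α} (hS : ∀ σ ∈ S, ∀ x, r (σ x) x) :
    orbitRel (closure S) α ≤ r := by
  suffices h : ∀ σ ∈ closure S, ∀ x, r (σ x) x by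
    intro x y hxy
    obtain ⟨σ, hσ, rfl⟩ := orbitRel_perm_apply.mp hxy
    exact h σ hσ y
  intro σ hσ
  induction hσ using closure_induction with
  | mem σ hσ => exact hS σ hσ
  | one => exact r.refl
  | mul σ τ _ _ hσ hτ => exact fun x => r.trans (hσ (τ x)) (hτ x)
  | inv σ _ hσ => exact fun x => r.symm (by simpa using hσ (σ⁻¹ x))

lemma sameCycle_setoid_le_orbitRel {H : Subgroup (Perm α)} {p : Perm α} (hp : p ∈ H) :
    SameCycle.setoid p ≤ orbitRel H α := by
  rintro x _ ⟨i, rfl⟩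
  exact (orbitRel H α).symm (orbitRel_apply_self (zpow_mem hp i) x)

lemma sameCycle_setoid_eq_orbitRel (p : Perm α) :
    SameCycle.setoid p = orbitRel (closure {p}) α :=
  le_antisymm (sameCycle_setoid_le_orbitRel (subset_closure rfl))
    (orbitRel_closure_le fun σ hσ x => by
      rw [Set.mem_singleton_iff.mp hσ]; exact sameCycle_apply_left.mpr (SameCycle.refl p x))

lemma card_quotient_orbitRel_le_one [Finite α] {H : Subgroup (Perm α)}
    (htrans : ∀ x y : α, ∃ σ ∈ H, σ x = y) : Nat.card (Quotient (orbitRel H α)) ≤ 1 := by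
  refine Finite.card_le_one_iff_subsingleton.mpr ⟨fun u v => ?_⟩
  induction u, v using Quotient.inductionOn₂ with | _ x y => ?_
  exact Quotient.sound (orbitRel_perm_apply.mpr (htrans y x))

variable [DecidableEq α]

lemma orbitRel_closure_insert_swap (S : Set (Perm α)) (a b : α) :
    orbitRel (closure (insert (swap a b) S)) α = (orbitRel (closure S) α).merge a b := by
  apply le_antisymm
  · refine orbitRel_closure_le fun σ hσ x => ?_
    rcases hσ with rfl | hσ
    · rw [swap_apply_def]
      split_ifs with hxa hxb
      · subst hxa; exact Setoid.symm' _ Setoid.merge_rel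
      · subst hxb; exact Setoid.merge_rel
      · exact Setoid.refl' _ x
    · exact Setoid.le_merge (orbitRel_apply_self (subset_closure hσ) x)
  · refine Setoid.merge_le (orbitRel_mono (closure_mono (Set.subset_insert _ _))) ?_
    simpa using orbitRel_apply_self (subset_closure (Set.mem_insert (swap a b) S)) b

end Orbits

section CycleCount

variable {α : Type*} [Fintype α] [DecidableEq α]

lemma two_mul_card_cycleType_le (p : Perm α) : 2 * Multiset.card p.cycleType ≤ #p.support := by
  simpa [sum_cycleType, mul_comm] using
    Multiset.card_nsmul_le_sum fun _ hm => two_le_of_mem_cycleType (σ := p) hm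

theorem card_quotient_sameCycle (p : Perm α) :
    Nat.card (Quotient (SameCycle.setoid p)) =
      Multiset.card p.cycleType + (Fintype.card α - #p.support) := by
  let f (x : α) : p.cycleFactorsFinset ⊕ {x // x ∉ p.support} :=
    if hx : x ∈ p.support then .inl ⟨p.cycleOf x, cycleOf_mem_cycleFactorsFinset_iff.mpr hx⟩
    else .inr ⟨x, hx⟩
  have hker : SameCycle.setoid p = Setoid.ker f := by
    ext x y
    rw [Setoid.ker_def]
    change SameCycle p x y ↔ _
    by_cases hx : x ∈ p.support <;> by_cases hy : y ∈ p.support <;>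
      simp only [f, dif_pos, dif_neg, hx, hy, not_false_eq_true, reduceCtorEq, iff_false,
        Sum.inl.injEq, Sum.inr.injEq, Subtype.mk.injEq]
    · exact sameCycle_iff_cycleOf_eq_of_mem_support hx hy
    · exact fun h => hy (h.mem_support_iff.mp hx)
    · exact fun h => hx (h.mem_support_iff.mpr hy)
    · exact ⟨fun h => h.eq_of_left (notMem_support.mp hx), fun h => h ▸ SameCycle.refl p x⟩
  have hf : Function.Surjective f := by
    rintro (⟨c, hc⟩ | ⟨x, hx⟩)
    · obtain ⟨x, hx⟩ := (mem_cycleFactorsFinset_iff.mp hc).1.nonempty_support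
      exact ⟨x, by simp only [f, dif_pos (mem_cycleFactorsFinset_support_le hc hx),
        cycle_is_cycleOf hx hc]⟩
    · exact ⟨x, by simp only [f, dif_neg hx]⟩
  rw [hker, Nat.card_congr (Setoid.quotientKerEquivOfSurjective f hf), Nat.card_sum,
    Nat.card_eq_fintype_card, Nat.card_eq_fintype_card, Fintype.card_coe, cycleType_def,
    Multiset.card_map, Fintype.card_subtype_compl, Fintype.card_coe]
  rfl

end CycleCount

section FinPerm

variable {n : ℕ}

lemma card_support_le (p : Perm (Fin n)) : #p.support ≤ n := by
  simpa using card_le_univ p.support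

lemma ind_add_cyclesCount (p : Perm (Fin n)) : ind p + cyclesCount p = n := by
  have := two_mul_card_cycleType_le p
  have := card_support_le p
  unfold ind cyclesCount
  omega

lemma cyclesCount_one : cyclesCount (1 : Perm (Fin n)) = n := by
  simp [cyclesCount]

lemma sign_eq_neg_one_pow_ind (p : Perm (Fin n)) : sign p = (-1) ^ ind p := by
  have hsum : #p.support + Multiset.card p.cycleType = ind p + 2 * Multiset.card p.cycleType := by
    have hind := ind_add_cyclesCount p
    have := card_support_le p
    unfold cyclesCount at hind
    omega
  rw [sign_of_cycleType, sum_cycleType, hsum, pow_add, pow_mul, Int.units_sq, one_pow, mul_one]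

lemma odd_ind_swap_mul_add {a b : Fin n} (hab : a ≠ b) (p : Perm (Fin n)) :
    Odd (ind (swap a b * p) + ind p) := by
  have h : ((-1 : ℤˣ)) ^ (ind (swap a b * p) + ind p) = -1 := by
    rw [pow_add, ← sign_eq_neg_one_pow_ind, ← sign_eq_neg_one_pow_ind, map_mul, sign_swap hab,
      neg_one_mul, neg_mul, Int.units_mul_self]
  exact (neg_one_pow_eq_neg_one_iff_odd (by decide)).mp h

lemma cyclesCount_eq_card_quotient (p : Perm (Fin n)) :
    cyclesCount p = Nat.card (Quotient (SameCycle.setoid p)) := by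
  rw [card_quotient_sameCycle, Fintype.card_fin]
  rfl

lemma cyclesCount_eq_card_quotient_merge_add (a b : Fin n) (p : Perm (Fin n)) :
    cyclesCount p = Nat.card (Quotient ((SameCycle.setoid p).merge a b)) +
      if SameCycle p a b then 0 else 1 := by
  rw [cyclesCount_eq_card_quotient]
  split_ifs with h
  · rw [Setoid.merge_eq_self h, add_zero]
  · exact (Setoid.card_quotient_merge_add_one h).symm

lemma merge_sameCycle_setoid_swap_mul (a b : Fin n) (p : Perm (Fin n)) :
    (SameCycle.setoid (swap a b * p)).merge a b = (SameCycle.setoid p).merge a b := by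
  rw [sameCycle_setoid_eq_orbitRel, sameCycle_setoid_eq_orbitRel, ← orbitRel_closure_insert_swap,
    ← orbitRel_closure_insert_swap, closure_pair_mul]

/-- With the classes of `a` and `b` merged, the cycles of `p` and of `swap a b * p` both become
the orbits of `⟨p, swap a b⟩`; as the two cycle counts differ in parity, exactly one of the two
merges is trivial. -/
theorem sameCycle_swap_mul_iff {a b : Fin n} (hab : a ≠ b) (p : Perm (Fin n)) :
    SameCycle (swap a b * p) a b ↔ ¬ SameCycle p a b := by
  have hq := cyclesCount_eq_card_quotient_merge_add a b (swap a b * p)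
  have hp := cyclesCount_eq_card_quotient_merge_add a b p
  rw [merge_sameCycle_setoid_swap_mul] at hq
  have hodd := Nat.odd_iff.mp (odd_ind_swap_mul_add hab p)
  have := ind_add_cyclesCount p
  have := ind_add_cyclesCount (swap a b * p)
  split_ifs at hp hq <;> first | tauto | (exfalso; omega)

theorem cyclesCount_swap_mul_of_sameCycle {a b : Fin n} (hab : a ≠ b) {p : Perm (Fin n)}
    (h : SameCycle p a b) : cyclesCount (swap a b * p) = cyclesCount p + 1 := by
  have hq := cyclesCount_eq_card_quotient_merge_add a b (swap a b * p)
  rw [merge_sameCycle_setoid_swap_mul,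
    if_neg fun h' => (sameCycle_swap_mul_iff hab p).mp h' h] at hq
  rw [hq, cyclesCount_eq_card_quotient_merge_add a b p, if_pos h]

theorem cyclesCount_swap_mul_of_not_sameCycle {a b : Fin n} (hab : a ≠ b) {p : Perm (Fin n)}
    (h : ¬ SameCycle p a b) : cyclesCount (swap a b * p) + 1 = cyclesCount p := by
  have hq := cyclesCount_eq_card_quotient_merge_add a b (swap a b * p)
  rw [merge_sameCycle_setoid_swap_mul, if_pos ((sameCycle_swap_mul_iff hab p).mpr h)] at hq
  rw [hq, cyclesCount_eq_card_quotient_merge_add a b p, if_neg h]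

theorem exists_isSwap_list_prod_eq (p : Perm (Fin n)) :
    ∃ L : List (Perm (Fin n)), (∀ τ ∈ L, τ.IsSwap) ∧ L.prod = p ∧ L.length = ind p := by
  induction h : #p.support using Nat.strong_induction_on generalizing p with
  | _ k ih =>
  by_cases hp : p = 1
  · subst hp
    exact ⟨[], by simp, rfl, by simp [ind, cyclesCount_one]⟩
  obtain ⟨a, ha⟩ : ∃ a, p a ≠ a := by
    by_contra! h
    exact hp (Perm.ext h)
  obtain ⟨L, hswap, hprod, hlen⟩ := ih _ (h ▸ card_support_swap_mul ha) (swap a (p a) * p) rfl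
  refine ⟨swap a (p a) :: L, ?_, by rw [List.prod_cons, hprod, swap_mul_self_mul], ?_⟩
  · exact List.forall_mem_cons.mpr ⟨⟨a, p a, ha.symm, rfl⟩, hswap⟩
  · have hsplit := cyclesCount_swap_mul_of_sameCycle ha.symm (⟨1, rfl⟩ : SameCycle p a (p a))
    have := ind_add_cyclesCount p
    have := ind_add_cyclesCount (swap a (p a) * p)
    rw [List.length_cons]
    omega

theorem add_cyclesCount_list_prod_le (L : List (Perm (Fin n))) (hL : ∀ τ ∈ L, τ.IsSwap) :
    n + cyclesCount L.prod ≤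
      L.length + 2 * Nat.card (Quotient (orbitRel (closure {σ | σ ∈ L}) (Fin n))) := by
  induction L with
  | nil =>
    have h := cyclesCount_eq_card_quotient (1 : Perm (Fin n))
    rw [cyclesCount_one, sameCycle_setoid_eq_orbitRel, closure_singleton_one] at h
    have hempty : {σ | σ ∈ ([] : List (Perm (Fin n)))} = ∅ := by
      ext; simp
    rw [hempty, Subgroup.closure_empty, ← h, List.prod_nil, List.length_nil, cyclesCount_one]
    omega
  | cons τ L ih =>
    obtain ⟨a, b, hab, rfl⟩ := hL τ (List.mem_cons_self ..)
    have ih := ih fun σ hσ => hL σ (List.mem_cons_of_mem _ hσ)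
    have hset : {σ | σ ∈ swap a b :: L} = insert (swap a b) {σ | σ ∈ L} := by
      ext; simp
    rw [hset, orbitRel_closure_insert_swap, List.prod_cons, List.length_cons]
    by_cases hrel : orbitRel (closure {σ | σ ∈ L}) (Fin n) a b
    · rw [Setoid.merge_eq_self hrel]
      by_cases hc : SameCycle L.prod a b
      · have := cyclesCount_swap_mul_of_sameCycle hab hc
        omega
      · have := cyclesCount_swap_mul_of_not_sameCycle hab hc
        omega
    · have hmerge := Setoid.card_quotient_merge_add_one hrel
      have hc : ¬ SameCycle L.prod a b := fun hc =>
        hrel (sameCycle_setoid_le_orbitRel (list_prod_mem fun σ hσ => subset_closure hσ) hc)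
      have := cyclesCount_swap_mul_of_not_sameCycle hab hc
      omega

theorem two_mul_sub_one_le_sum_ind {r : ℕ} (g : Fin r → Perm (Fin n))
    (htrans : ∀ x y : Fin n, ∃ h ∈ closure (Set.range g), h x = y)
    (hprod : (List.ofFn g).prod = 1) :
    2 * (n - 1) ≤ ∑ i, ind (g i) := by
  choose L hswap hLprod hLlen using fun i => exists_isSwap_list_prod_eq (g i)
  set LL := (List.ofFn L).flatten
  have hswapLL : ∀ τ ∈ LL, τ.IsSwap := by
    simp only [LL, List.mem_flatten, List.mem_ofFn]
    rintro τ ⟨_, ⟨i, rfl⟩, hτ⟩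
    exact hswap i τ hτ
  have hprodLL : LL.prod = 1 := by
    simp [LL, List.prod_flatten, List.map_ofFn, Function.comp_def, hLprod, hprod]
  have hlenLL : LL.length = ∑ i, ind (g i) := by
    simp [LL, List.length_flatten, List.map_ofFn, Function.comp_def, hLlen, List.sum_ofFn]
  have hle : closure (Set.range g) ≤ closure {σ | σ ∈ LL} := by
    rw [closure_le]
    rintro _ ⟨i, rfl⟩
    rw [← hLprod i]
    exact list_prod_mem fun σ hσ => subset_closure
      (List.mem_flatten.mpr ⟨L i, List.mem_ofFn.mpr ⟨i, rfl⟩, hσ⟩)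
  have horbits := card_quotient_orbitRel_le_one fun x y =>
    (htrans x y).imp fun σ hσ => ⟨hle hσ.1, hσ.2⟩
  have hword := add_cyclesCount_list_prod_le LL hswapLL
  rw [hprodLL, cyclesCount_one, hlenLL] at hword
  omega

theorem even_sum_ind_of_prod_eq_one {r : ℕ} (g : Fin r → Perm (Fin n))
    (hprod : (List.ofFn g).prod = 1) : Even (∑ i, ind (g i)) := by
  refine (neg_one_pow_eq_one_iff_even (R := ℤˣ) (by decide)).mp ?_
  calc (-1 : ℤˣ) ^ ∑ i, ind (g i) = ∏ i, sign (g i) := by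
        simp only [sign_eq_neg_one_pow_ind, Finset.prod_pow_eq_pow_sum]
    _ = sign (List.ofFn g).prod := by rw [map_list_prod, List.map_ofFn, List.prod_ofFn]; rfl
    _ = 1 := by rw [hprod, map_one]

end FinPerm

/-- Riemann–Hurwitz constraint: for a transitive product-one tuple of
permutations, the total index is even and at least `2(n-1)`. -/
theorem stmt_7 {n r : ℕ} (g : Fin r → Equiv.Perm (Fin n))
    (htrans : ∀ x y : Fin n, ∃ h ∈ Subgroup.closure (Set.range g), h x = y)
    (hprod : (List.ofFn g).prod = 1) :
    2 * (n - 1) ≤ ∑ i, ind (g i) ∧ Even (∑ i, ind (g i)) :=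
  ⟨two_mul_sub_one_le_sum_ind g htrans hprod, even_sum_ind_of_prod_eq_one g hprod⟩
end

section
/- In the Hurwitz monodromy group H_r = ⟨q₁,...,q_{r−1} | braid relations, q₁q₂⋯q_{r−1}q_{r−1}⋯q₂q₁ = 1⟩ with r = 4, setting γ₀ = q₁q₂, γ₁ = q₁q₂q₁, γ_∞ = q₂ in the quotient H₄/⟨q₁q₃⁻¹, sh²⟩ (where sh = q₁q₂q₃), one has γ₀γ₁γ_∞ = 1 and γ₀³ = 1. -/
/-- In the reduced Hurwitz monodromy quotient for `r = 4`: for any group `Γ`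
and elements `q₁, q₂, q₃` satisfying the braid relations, the Hurwitz relation
`q₁q₂q₃q₃q₂q₁ = 1`, the reduced relation `q₁ = q₃` (i.e. `q₁q₃⁻¹ = 1`) and
`sh² = 1` with `sh = q₁q₂q₃`, the elements `γ₀ = q₁q₂`, `γ₁ = q₁q₂q₁`,
`γ_∞ = q₂` satisfy `γ₀γ₁γ_∞ = 1` and `γ₀³ = 1`. -/
theorem stmt_9 {Γ : Type*} [Group Γ] (q₁ q₂ q₃ : Γ)
    (hbr₁ : q₁ * q₂ * q₁ = q₂ * q₁ * q₂)
    (hbr₂ : q₂ * q₃ * q₂ = q₃ * q₂ * q₃)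
    (hbr₃ : q₁ * q₃ = q₃ * q₁)
    (hHur : q₁ * q₂ * q₃ * q₃ * q₂ * q₁ = 1)
    (hred : q₁ * q₃⁻¹ = 1)
    (hsh : (q₁ * q₂ * q₃) ^ 2 = 1) :
    (q₁ * q₂) * (q₁ * q₂ * q₁) * q₂ = 1 ∧ (q₁ * q₂) ^ 3 = 1 := by
  have h31 : q₃ = q₁ := (mul_inv_eq_one.mp hred).symm
  subst h31
  rw [sq] at hsh
  have key : (q₃ * q₂) * (q₃ * q₂ * q₃) * q₂ = 1 := by
    calc (q₃ * q₂) * (q₃ * q₂ * q₃) * q₂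
        = (q₃ * q₂ * q₃) * (q₂ * q₃ * q₂) := by group
      _ = (q₃ * q₂ * q₃) * (q₃ * q₂ * q₃) := by rw [hbr₁]
      _ = 1 := hsh
  refine ⟨key, ?_⟩
  calc (q₃ * q₂) ^ 3 = (q₃ * q₂) * (q₃ * q₂ * q₃) * q₂ := by rw [pow_succ, pow_succ, pow_one]; group
    _ = 1 := key
end
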